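/- Let ξ_{n,i} be defined by ξ_{0,0} = 1, ξ_{0,i} = 0 for i ≠ 0, and ξ_{n+1,i} = (1+2n−6i)·ξ_{n,i} + (n−2i+2)·ξ_{n,i−1} − 4(i+1)·ξ_{n,i+1}, and set ξ_n(x) = Σ_{i=0}^{⌊n/2⌋} ξ_{n,i} x^i. Then for every n ≥ 0 and every real x, ξ_n(x−2) = Σ_{π ∈ S_n} x^{lpk(π)}, the sum over all permutations π of {1,…,n}. In particular, ξ_{n,i} is a positive integer for all 0 ≤ i ≤ ⌊n/2⌋. -/

import Mathlib

open Finset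

/-- Signed permutations of order `n` (the hyperoctahedral group), modeled as a
permutation of `Fin n` together with a sign for each position. -/
abbrev BSigned (n : ℕ) := Equiv.Perm (Fin n) × (Fin n → Bool)

/-- The word of a signed permutation: `bword σ j = σ(j)` for `1 ≤ j ≤ n`,
with the convention `σ(0) = 0`. -/
def bword {n : ℕ} (σ : BSigned n) (j : ℕ) : ℤ :=
  if h : 1 ≤ j ∧ j ≤ n then
    (if σ.2 ⟨j - 1, by omega⟩ then -1 else 1) * ((σ.1 ⟨j - 1, by omega⟩ : ℕ) + 1)
  else 0

/-- The number of alternating descents of a signed permutation: the number of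
`0 ≤ j ≤ n-1` such that `j` is even and `σ(j) < σ(j+1)`, or `j` is odd and `σ(j) > σ(j+1)`. -/
def altdesB {n : ℕ} (σ : BSigned n) : ℕ :=
  ((Finset.range n).filter (fun j => (Even j ∧ bword σ j < bword σ (j + 1)) ∨
      (Odd j ∧ bword σ (j + 1) < bword σ j))).card

/-- The type B alternating Eulerian number `B̂(n,k)`. -/
def Bhat (n k : ℕ) : ℕ :=
  (Finset.univ.filter (fun σ : BSigned n => altdesB σ = k)).card

/-- The type B alternating Eulerian polynomial `B̂_n(x)` as a real function. -/
noncomputable def Bpoly (n : ℕ) (x : ℝ) : ℝ :=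
  ∑ σ : BSigned n, x ^ altdesB σ

/-- The word of a permutation of `{1,…,n}`: `aword π j = π(j)` for `1 ≤ j ≤ n`,
with the convention `π(0) = 0`. -/
def aword {n : ℕ} (π : Equiv.Perm (Fin n)) (j : ℕ) : ℕ :=
  if h : 1 ≤ j ∧ j ≤ n then (π ⟨j - 1, by omega⟩ : ℕ) + 1 else 0

/-- The number of alternating descents of a permutation: the number of
`1 ≤ j ≤ n-1` such that `j` is odd and `π(j) > π(j+1)`, or `j` is even and `π(j) < π(j+1)`. -/
def altdesA {n : ℕ} (π : Equiv.Perm (Fin n)) : ℕ :=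
  ((Finset.Icc 1 (n - 1)).filter (fun j => (Odd j ∧ aword π (j + 1) < aword π j) ∨
      (Even j ∧ aword π j < aword π (j + 1)))).card

/-- The type A alternating Eulerian number `Â(n,k)`. -/
def Ahat (n k : ℕ) : ℕ :=
  (Finset.univ.filter (fun π : Equiv.Perm (Fin n) => altdesA π = k)).card

/-- The type A alternating Eulerian polynomial `Â_n(x)` as a real function. -/
noncomputable def Apoly (n : ℕ) (x : ℝ) : ℝ :=
  ∑ π : Equiv.Perm (Fin n), x ^ altdesA π

/-- The number of left peaks of a permutation: indices `1 ≤ i ≤ n-1` with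
`π(i-1) < π(i) > π(i+1)`, where `π(0) = 0`. -/
def lpk {n : ℕ} (π : Equiv.Perm (Fin n)) : ℕ :=
  ((Finset.Icc 1 (n - 1)).filter (fun i =>
      aword π (i - 1) < aword π i ∧ aword π (i + 1) < aword π i)).card

/-- `M n k` is the number of permutations of `{1,…,n}` with exactly `k` left peaks. -/
def M (n k : ℕ) : ℕ :=
  (Finset.univ.filter (fun π : Equiv.Perm (Fin n) => lpk π = k)).card

/-- The derivative polynomials for secant: `Q 0 = 1`,
`Q (n+1) = x Q n + (1+x²) (Q n)'`. -/
noncomputable def Q : ℕ → Polynomial ℝ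
  | 0 => 1
  | n + 1 => Polynomial.X * Q n + (1 + Polynomial.X ^ 2) * Polynomial.derivative (Q n)

/-- The coefficients `ξ_{n,i}` (terms with negative index vanish). -/
def xi : ℕ → ℤ → ℤ
  | 0, i => if i = 0 then 1 else 0
  | n + 1, i => (1 + 2 * (n : ℤ) - 6 * i) * xi n i + ((n : ℤ) - 2 * i + 2) * xi n (i - 1)
      - 4 * (i + 1) * xi n (i + 1)

/-- The polynomial `ξ_n(x) = Σ_{i=0}^{⌊n/2⌋} ξ_{n,i} x^i` as a real function. -/
noncomputable def xiPoly (n : ℕ) (x : ℝ) : ℝ :=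
  ∑ i ∈ Finset.range (n / 2 + 1), (xi n i : ℝ) * x ^ i

/-- A snake: a signed permutation with `σ(0) < σ(1) > σ(2) < σ(3) > ⋯`. -/
def IsSnake {n : ℕ} (σ : BSigned n) : Prop :=
  ∀ i : ℕ, (2 * i + 1 ≤ n → bword σ (2 * i) < bword σ (2 * i + 1)) ∧
    (2 * i + 2 ≤ n → bword σ (2 * i + 2) < bword σ (2 * i + 1))

/-- The Springer number `s_n`: the number of snakes of order `n`. -/
noncomputable def springer (n : ℕ) : ℕ := Nat.card {σ : BSigned n // IsSnake σ}

/-- An alternating (down-up) permutation: `π(1) > π(2) < π(3) > ⋯`. -/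
def IsAlternating {m : ℕ} (π : Equiv.Perm (Fin m)) : Prop :=
  ∀ j : ℕ, 1 ≤ j → j + 1 ≤ m →
    (Odd j → aword π (j + 1) < aword π j) ∧ (Even j → aword π j < aword π (j + 1))

/-- The secant number `E_{2n}`: the number of alternating permutations of `{1,…,2n}`. -/
noncomputable def secantNumber (n : ℕ) : ℕ :=
  Nat.card {π : Equiv.Perm (Fin (2 * n)) // IsAlternating π}


/-!
Inserting the letter `n + 1` into a permutation `π` of `{1,…,n}` keeps `lpk π` at the
`2 lpk π + 1` positions adjacent to a left peak of `π` or at the end, and raises it by one at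
the other `n - 2 lpk π` positions. Hence `A_n(x) = ∑_π x ^ lpk π` satisfies
`A_{n+1} = (1 + n x) A_n + 2 x (1 - x) A_n'`, and after the substitution `x = X + 2` this reads
`P_{n+1} = (1 + n (X + 2)) P_n - 2 (X + 1) (X + 2) P_n'`, which coefficientwise is exactly the
recurrence defining `ξ_{n,i}`. So `ξ_{n,i}` is the `i`-th coefficient of `∑_π (X + 2) ^ lpk π`,
namely `∑_π binom(lpk π, i) 2 ^ (lpk π - i)`, and it is positive for `i ≤ ⌊n/2⌋` because some
permutation has `⌊n/2⌋` left peaks.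
-/

section LeftPeaks

variable {n : ℕ}

def leftPeaks (π : Equiv.Perm (Fin n)) : Finset ℕ :=
  (Icc 1 (n - 1)).filter (fun i => aword π (i - 1) < aword π i ∧ aword π (i + 1) < aword π i)

theorem card_leftPeaks (π : Equiv.Perm (Fin n)) : #(leftPeaks π) = lpk π := rfl

theorem aword_le (π : Equiv.Perm (Fin n)) (j : ℕ) : aword π j ≤ n := by
  unfold aword
  split
  · exact (π _).isLt
  · exact Nat.zero_le n

theorem mem_leftPeaks {π : Equiv.Perm (Fin n)} {i : ℕ} :
    i ∈ leftPeaks π ↔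
      1 ≤ i ∧ i < n ∧ aword π (i - 1) < aword π i ∧ aword π (i + 1) < aword π i := by
  simp only [leftPeaks, mem_filter, mem_Icc]
  omega

theorem succ_notMem_leftPeaks {π : Equiv.Perm (Fin n)} {i : ℕ} (h : i ∈ leftPeaks π) :
    i + 1 ∉ leftPeaks π := by
  rw [mem_leftPeaks] at *
  simp only [Nat.add_sub_cancel]
  omega

/-- The positions `p ≤ n` at which inserting `n + 1` into `π` creates no new left peak. -/
def peakNeighbourhood (π : Equiv.Perm (Fin n)) : Finset ℕ :=
  insert n (leftPeaks π ∪ (leftPeaks π).image (· - 1))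

theorem mem_peakNeighbourhood {π : Equiv.Perm (Fin n)} {p : ℕ} :
    p ∈ peakNeighbourhood π ↔ p = n ∨ p ∈ leftPeaks π ∨ p + 1 ∈ leftPeaks π := by
  simp only [peakNeighbourhood, mem_insert, mem_union, mem_image]
  refine or_congr_right (or_congr_right ⟨?_, fun h => ⟨p + 1, h, rfl⟩⟩)
  rintro ⟨q, hq, rfl⟩
  rwa [Nat.sub_add_cancel (mem_leftPeaks.mp hq).1]

theorem peakNeighbourhood_subset_range (π : Equiv.Perm (Fin n)) :
    peakNeighbourhood π ⊆ range (n + 1) := by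
  intro p hp
  rw [mem_range]
  rcases mem_peakNeighbourhood.mp hp with rfl | h | h
  · exact Nat.lt_succ_self p
  · have := (mem_leftPeaks.mp h).2.1
    omega
  · have := (mem_leftPeaks.mp h).2.1
    omega

theorem card_peakNeighbourhood (π : Equiv.Perm (Fin n)) :
    #(peakNeighbourhood π) = 2 * lpk π + 1 := by
  have hpred : Set.InjOn (· - 1) (leftPeaks π : Set ℕ) := fun a ha b hb hab => by
    have := (mem_leftPeaks.mp ha).1
    have := (mem_leftPeaks.mp hb).1
    simp only at hab
    omega
  have hdisj : Disjoint (leftPeaks π) ((leftPeaks π).image (· - 1)) := by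
    refine disjoint_left.mpr fun a ha ha' => ?_
    obtain ⟨q, hq, rfl⟩ := mem_image.mp ha'
    exact succ_notMem_leftPeaks ha (by rwa [Nat.sub_add_cancel (mem_leftPeaks.mp hq).1])
  have hn : n ∉ leftPeaks π ∪ (leftPeaks π).image (· - 1) := by
    simp only [mem_union, mem_image, not_or, not_exists, not_and]
    exact ⟨fun h => (mem_leftPeaks.mp h).2.1.ne rfl,
      fun q hq => by have := (mem_leftPeaks.mp hq).2.1; omega⟩
  rw [peakNeighbourhood, card_insert_of_notMem hn, card_union_of_disjoint hdisj,
    card_image_of_injOn hpred, card_leftPeaks]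
  ring

theorem two_mul_lpk_le (π : Equiv.Perm (Fin n)) : 2 * lpk π ≤ n := by
  have := card_le_card (peakNeighbourhood_subset_range π)
  rw [card_peakNeighbourhood, card_range] at this
  omega

/-- Insert the letter `n + 1` into `π` so that it stands at index `p`, i.e. at position `p + 1`
of the word `aword`. -/
def insertMax (p : Fin (n + 1)) (π : Equiv.Perm (Fin n)) : Equiv.Perm (Fin (n + 1)) :=
  (finSuccEquiv' p).trans ((Equiv.optionCongr π).trans (finSuccEquiv' (Fin.last n)).symm)

theorem insertMax_apply_self (p : Fin (n + 1)) (π : Equiv.Perm (Fin n)) :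
    insertMax p π p = Fin.last n := by
  simp [insertMax]

theorem insertMax_apply_succAbove (p : Fin (n + 1)) (π : Equiv.Perm (Fin n)) (j : Fin n) :
    insertMax p π (p.succAbove j) = (π j).castSucc := by
  simp [insertMax, Fin.succAbove_last]

theorem insertMax_injective :
    Function.Injective (fun pπ : Fin (n + 1) × Equiv.Perm (Fin n) => insertMax pπ.1 pπ.2) := by
  rintro ⟨p, π⟩ ⟨q, τ⟩ h
  simp only at h
  obtain rfl : p = q := (insertMax q τ).injective <| by
    rw [insertMax_apply_self q τ, ← h, insertMax_apply_self]
  refine Prod.ext rfl (Equiv.ext fun j => Fin.castSucc_injective n ?_)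
  rw [← insertMax_apply_succAbove, ← insertMax_apply_succAbove, h]

theorem insertMax_bijective :
    Function.Bijective (fun pπ : Fin (n + 1) × Equiv.Perm (Fin n) => insertMax pπ.1 pπ.2) := by
  rw [Fintype.bijective_iff_injective_and_card]
  refine ⟨insertMax_injective, ?_⟩
  simp [Fintype.card_perm, Nat.factorial_succ]

theorem aword_insertMax_of_le (p : Fin (n + 1)) (π : Equiv.Perm (Fin n)) {j : ℕ}
    (hj : j ≤ p) : aword (insertMax p π) j = aword π j := by
  rcases Nat.eq_zero_or_pos j with rfl | hj0
  · simp [aword]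
  have hjn : j ≤ n := hj.trans (Nat.lt_succ_iff.mp p.isLt)
  have hpos : (⟨j - 1, by omega⟩ : Fin (n + 1)) = p.succAbove ⟨j - 1, by omega⟩ :=
    (Fin.succAbove_of_castSucc_lt p ⟨j - 1, by omega⟩ (by simp [Fin.lt_def]; omega)).symm
  unfold aword
  rw [dif_pos ⟨hj0, by omega⟩, dif_pos ⟨hj0, hjn⟩, hpos, insertMax_apply_succAbove]
  rfl

theorem aword_insertMax_succ (p : Fin (n + 1)) (π : Equiv.Perm (Fin n)) :
    aword (insertMax p π) (p + 1) = n + 1 := by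
  unfold aword
  rw [dif_pos ⟨by omega, by omega⟩]
  simp [insertMax_apply_self]

theorem aword_insertMax_of_lt (p : Fin (n + 1)) (π : Equiv.Perm (Fin n)) {j : ℕ}
    (hj : p + 1 < j) : aword (insertMax p π) j = aword π (j - 1) := by
  unfold aword
  by_cases hjn : j ≤ n + 1
  · have hpos : (⟨j - 1, by omega⟩ : Fin (n + 1)) = p.succAbove ⟨j - 1 - 1, by omega⟩ := by
      rw [Fin.succAbove_of_le_castSucc p ⟨j - 1 - 1, by omega⟩ (by simp [Fin.le_def]; omega)]
      ext
      simp only [Fin.val_succ]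
      omega
    rw [dif_pos ⟨by omega, hjn⟩, dif_pos ⟨by omega, by omega⟩, hpos, insertMax_apply_succAbove]
    rfl
  · rw [dif_neg (by omega), dif_neg (by omega)]

theorem mem_leftPeaks_insertMax (p : Fin (n + 1)) (π : Equiv.Perm (Fin n)) (i : ℕ) :
    i ∈ leftPeaks (insertMax p π) ↔
      (i < p ∧ i ∈ leftPeaks π) ∨ (i = p + 1 ∧ (p : ℕ) < n) ∨
        (p + 2 < i ∧ i - 1 ∈ leftPeaks π) := by
  have hp := p.isLt
  have hle := aword_le π
  have hle' := aword_le (insertMax p π)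
  simp only [mem_leftPeaks]
  rcases lt_or_ge i p with hi | hi
  · rw [aword_insertMax_of_le p π (j := i - 1) (by omega), aword_insertMax_of_le p π hi.le,
      aword_insertMax_of_le p π (j := i + 1) hi]
    omega
  obtain rfl | rfl | rfl | hi := (by omega : i = p ∨ i = p + 1 ∨ i = p + 2 ∨ p + 2 < i)
  · rw [aword_insertMax_succ]
    have := hle' p
    omega
  · rw [aword_insertMax_succ, Nat.add_sub_cancel, aword_insertMax_of_le p π le_rfl]
    rcases lt_or_ge (p : ℕ) n with hpn | hpn
    · rw [aword_insertMax_of_lt p π (j := p + 1 + 1) (by omega), Nat.add_sub_cancel]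
      have := hle p
      have := hle (p + 1)
      omega
    · omega
  · rw [show (p : ℕ) + 2 - 1 = p + 1 by omega, aword_insertMax_succ]
    have := hle' (p + 2)
    omega
  · obtain ⟨k, rfl⟩ : ∃ k, i = k + 1 := ⟨i - 1, by omega⟩
    rw [aword_insertMax_of_lt p π (j := k + 1 - 1) (by omega),
      aword_insertMax_of_lt p π (j := k + 1) (by omega),
      aword_insertMax_of_lt p π (j := k + 1 + 1) (by omega)]
    simp only [Nat.add_sub_cancel]
    omega

/-- Where a left peak `q` of `π` ends up in `insertMax p π`: the peak at `p` or at `p + 1`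
(there is at most one) is absorbed by the new peak `n + 1` at `p + 1`. -/
def peakShift (p q : ℕ) : ℕ :=
  if q < p then q else if q ≤ p + 1 then p + 1 else q + 1

theorem injOn_peakShift (π : Equiv.Perm (Fin n)) (p : ℕ) :
    Set.InjOn (peakShift p) (leftPeaks π) := by
  intro a ha b hb hab
  by_contra hne
  have : a + 1 = b ∨ b + 1 = a := by
    simp only [peakShift] at hab
    split_ifs at hab <;> omega
  rcases this with rfl | rfl
  exacts [succ_notMem_leftPeaks ha hb, succ_notMem_leftPeaks hb ha]

theorem succ_mem_image_peakShift {π : Equiv.Perm (Fin n)} {p : ℕ} :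
    p + 1 ∈ (leftPeaks π).image (peakShift p) ↔ p ∈ leftPeaks π ∨ p + 1 ∈ leftPeaks π := by
  refine ⟨fun h => ?_, fun h => ?_⟩
  · obtain ⟨q, hq, hpq⟩ := mem_image.mp h
    obtain rfl | rfl : q = p ∨ q = p + 1 := by
      simp only [peakShift] at hpq
      split_ifs at hpq <;> omega
    exacts [Or.inl hq, Or.inr hq]
  · rcases h with h | h
    exacts [mem_image.mpr ⟨p, h, by simp [peakShift]⟩,
      mem_image.mpr ⟨p + 1, h, by simp [peakShift]⟩]

theorem mem_leftPeaks_insertMax_iff_mem_image (p : Fin (n + 1)) (π : Equiv.Perm (Fin n))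
    (i : ℕ) : i ∈ leftPeaks (insertMax p π) ↔
      (i = p + 1 ∧ (p : ℕ) < n) ∨ i ∈ (leftPeaks π).image (peakShift p) := by
  rw [mem_leftPeaks_insertMax, mem_image]
  constructor
  · rintro (⟨hi, h⟩ | h | ⟨hi, h⟩)
    · exact Or.inr ⟨i, h, if_pos hi⟩
    · exact Or.inl h
    · exact Or.inr ⟨i - 1, h, by simp only [peakShift]; split_ifs <;> omega⟩
  · rintro (h | ⟨q, hq, rfl⟩)
    · exact Or.inr (Or.inl h)
    · have := (mem_leftPeaks.mp hq).2.1
      simp only [peakShift]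
      split_ifs with h1 h2
      · exact Or.inl ⟨h1, hq⟩
      · exact Or.inr (Or.inl ⟨rfl, by omega⟩)
      · exact Or.inr (Or.inr ⟨by omega, by simpa using hq⟩)

theorem lpk_insertMax (p : Fin (n + 1)) (π : Equiv.Perm (Fin n)) :
    lpk (insertMax p π) = if (p : ℕ) ∈ peakNeighbourhood π then lpk π else lpk π + 1 := by
  rw [← card_leftPeaks, ← card_leftPeaks, ← card_image_of_injOn (injOn_peakShift π p)]
  by_cases hpn : (p : ℕ) < n
  · have : leftPeaks (insertMax p π) =
        insert ((p : ℕ) + 1) ((leftPeaks π).image (peakShift p)) := by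
      ext i
      simp [mem_leftPeaks_insertMax_iff_mem_image, hpn]
    rw [this, card_insert_eq_ite]
    simp only [succ_mem_image_peakShift, mem_peakNeighbourhood, hpn.ne, false_or]
  · have : leftPeaks (insertMax p π) = (leftPeaks π).image (peakShift p) := by
      ext i
      simp [mem_leftPeaks_insertMax_iff_mem_image, hpn]
    rw [this, if_pos (mem_peakNeighbourhood.mpr (Or.inl (by omega)))]

theorem sum_pow_lpk_insertMax {R : Type*} [CommSemiring R] (π : Equiv.Perm (Fin n)) (y : R) :
    ∑ p : Fin (n + 1), y ^ lpk (insertMax p π) =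
      (2 * lpk π + 1 : ℕ) * y ^ lpk π + (n - 2 * lpk π : ℕ) * y ^ (lpk π + 1) := by
  have hN := inter_eq_right.mpr (peakNeighbourhood_subset_range π)
  have hcard := card_filter_add_card_filter_not (s := range (n + 1)) (· ∈ peakNeighbourhood π)
  rw [filter_mem_eq_inter, hN, card_peakNeighbourhood, card_range] at hcard
  simp only [lpk_insertMax, apply_ite (y ^ ·)]
  rw [Fin.sum_univ_eq_sum_range (fun p => if p ∈ peakNeighbourhood π then y ^ lpk π
    else y ^ (lpk π + 1)) (n + 1), sum_ite, sum_const, sum_const, filter_mem_eq_inter, hN,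
    card_peakNeighbourhood, nsmul_eq_mul, nsmul_eq_mul]
  congr 3
  omega

theorem sum_pow_lpk_succ {R : Type*} [CommSemiring R] (y : R) :
    ∑ σ : Equiv.Perm (Fin (n + 1)), y ^ lpk σ = ∑ π : Equiv.Perm (Fin n),
      ((2 * lpk π + 1 : ℕ) * y ^ lpk π + (n - 2 * lpk π : ℕ) * y ^ (lpk π + 1)) := by
  rw [← insertMax_bijective.sum_comp, Fintype.sum_prod_type, sum_comm]
  simp only [sum_pow_lpk_insertMax]

end LeftPeaks

theorem exists_lpk_eq_half (n : ℕ) : ∃ π : Equiv.Perm (Fin n), lpk π = n / 2 := by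
  induction n with
  | zero => exact ⟨1, by have := two_mul_lpk_le (1 : Equiv.Perm (Fin 0)); omega⟩
  | succ n ih =>
    obtain ⟨π, hπ⟩ := ih
    rcases Nat.even_or_odd n with hn | hn
    · refine ⟨insertMax (Fin.last n) π, ?_⟩
      rw [lpk_insertMax, if_pos (mem_peakNeighbourhood.mpr (Or.inl (Fin.val_last n)))]
      have := Nat.even_iff.mp hn
      omega
    · have hlt : #(peakNeighbourhood π) < #(range (n + 1)) := by
        rw [card_peakNeighbourhood, card_range]
        have := Nat.odd_iff.mp hn
        omega
      obtain ⟨p, hp, hpN⟩ := exists_mem_notMem_of_card_lt_card hlt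
      refine ⟨insertMax ⟨p, mem_range.mp hp⟩ π, ?_⟩
      rw [lpk_insertMax, if_neg hpN]
      have := Nat.odd_iff.mp hn
      omega

section XiStep

open Polynomial

variable {R : Type*} [CommRing R]

/-- On coefficients, `xiStep n` is the recurrence defining `xi (n + 1)` from `xi n`. -/
noncomputable def xiStep (n : ℕ) (p : R[X]) : R[X] :=
  (1 + (n : R[X]) * (X + 2)) * p - 2 * (X + 1) * (X + 2) * derivative p

theorem xiStep_eq (n : ℕ) (p : R[X]) :
    xiStep n p = C (1 + 2 * n : R) * p + C (n : R) * (X * p) - C 2 * (X * (X * derivative p))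
      - C 6 * (X * derivative p) - C 4 * derivative p := by
  simp only [xiStep, map_add, map_mul, map_natCast, map_ofNat, map_one]
  ring

theorem coeff_xiStep_zero (n : ℕ) (p : R[X]) :
    (xiStep n p).coeff 0 = (1 + 2 * n) * p.coeff 0 - 4 * p.coeff 1 := by
  simp only [xiStep_eq, coeff_sub, coeff_add, coeff_C_mul, coeff_X_mul_zero, coeff_derivative]
  push_cast
  ring

theorem coeff_xiStep_succ (n i : ℕ) (p : R[X]) :
    (xiStep n p).coeff (i + 1) =
      (1 + 2 * n - 6 * (i + 1)) * p.coeff (i + 1) + (n - 2 * (i + 1) + 2) * p.coeff i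
        - 4 * (i + 2) * p.coeff (i + 2) := by
  rcases i with _ | i <;>
  · simp only [xiStep_eq, coeff_sub, coeff_add, coeff_C_mul, coeff_X_mul, coeff_X_mul_zero,
      coeff_derivative]
    push_cast
    ring

end XiStep

theorem xi_neg (n : ℕ) {i : ℤ} (hi : i < 0) : xi n i = 0 := by
  induction n generalizing i with
  | zero => simp [xi, hi.ne]
  | succ n ih =>
    rw [xi, ih hi, ih (by omega : i - 1 < 0)]
    rcases (by omega : i = -1 ∨ i + 1 < 0) with rfl | hi'
    · ring
    · rw [ih hi']
      ring

section ShiftedLpkPoly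

open Polynomial

/-- The left peak polynomial `∑ π, x ^ lpk π` written in the variable `X = x - 2`. -/
noncomputable def shiftedLpkPoly (n : ℕ) : ℤ[X] :=
  ∑ π : Equiv.Perm (Fin n), (X + C 2) ^ lpk π

theorem shiftedLpkPoly_zero : shiftedLpkPoly 0 = 1 := by
  have := two_mul_lpk_le (1 : Equiv.Perm (Fin 0))
  simp [shiftedLpkPoly, show lpk (1 : Equiv.Perm (Fin 0)) = 0 by omega]

theorem shiftedLpkPoly_succ (n : ℕ) :
    shiftedLpkPoly (n + 1) = xiStep n (shiftedLpkPoly n) := by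
  rw [shiftedLpkPoly, sum_pow_lpk_succ, xiStep, shiftedLpkPoly, mul_sum, derivative_sum, mul_sum,
    ← sum_sub_distrib]
  refine sum_congr rfl fun π _ => ?_
  -- termwise this is Euler's identity `(X + 2) * derivative ((X + 2) ^ l) = l * (X + 2) ^ l`
  have hle := two_mul_lpk_le π
  rw [derivative_X_add_C_pow]
  rcases Nat.eq_zero_or_pos (lpk π) with h | h
  · simp [h]
  · obtain ⟨l, hl⟩ : ∃ l, lpk π = l + 1 := ⟨lpk π - 1, by omega⟩
    rw [hl] at hle ⊢
    simp only [map_natCast, map_ofNat, Nat.add_sub_cancel]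
    push_cast [Nat.cast_sub hle]
    ring

theorem xi_eq_coeff_shiftedLpkPoly (n i : ℕ) : xi n i = (shiftedLpkPoly n).coeff i := by
  induction n generalizing i with
  | zero => simp [xi, shiftedLpkPoly_zero, coeff_one]
  | succ n ih =>
    rw [xi, shiftedLpkPoly_succ]
    rcases i with _ | i
    · rw [coeff_xiStep_zero, ← ih, ← ih 1, Nat.cast_zero, zero_sub, xi_neg n neg_one_lt_zero]
      push_cast
      ring
    · rw [coeff_xiStep_succ, ← ih, ← ih, ← ih]
      push_cast [add_sub_cancel_right, add_assoc, one_add_one_eq_two]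
      ring

theorem natDegree_shiftedLpkPoly_le (n : ℕ) : (shiftedLpkPoly n).natDegree ≤ n / 2 :=
  natDegree_sum_le_of_forall_le _ _ fun π _ => by
    rw [natDegree_pow_X_add_C]
    have := two_mul_lpk_le π
    omega

theorem coeff_shiftedLpkPoly (n i : ℕ) :
    (shiftedLpkPoly n).coeff i =
      ∑ π : Equiv.Perm (Fin n), 2 ^ (lpk π - i) * ((lpk π).choose i : ℤ) := by
  simp only [shiftedLpkPoly, finsetSum_coeff, coeff_X_add_C_pow]

theorem xiPoly_sub_two (n : ℕ) (x : ℝ) :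
    xiPoly n (x - 2) = ∑ π : Equiv.Perm (Fin n), x ^ lpk π := by
  calc xiPoly n (x - 2) = (shiftedLpkPoly n).eval₂ (Int.castRingHom ℝ) (x - 2) := by
        rw [eval₂_eq_sum_range' _ (Nat.lt_succ_of_le (natDegree_shiftedLpkPoly_le n)), xiPoly]
        simp only [xi_eq_coeff_shiftedLpkPoly, eq_intCast]
    _ = ∑ π : Equiv.Perm (Fin n), x ^ lpk π := by
        simp only [shiftedLpkPoly, eval₂_finsetSum, eval₂_pow, eval₂_add, eval₂_X,
          eval₂_ofNat, eq_intCast, Int.cast_ofNat, sub_add_cancel]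

theorem xi_pos {n i : ℕ} (hi : i ≤ n / 2) : 0 < xi n i := by
  rw [xi_eq_coeff_shiftedLpkPoly, coeff_shiftedLpkPoly]
  obtain ⟨π, hπ⟩ := exists_lpk_eq_half n
  refine sum_pos' (fun _ _ => by positivity) ⟨π, mem_univ π, ?_⟩
  rw [hπ]
  exact mul_pos (by positivity) (by exact_mod_cast Nat.choose_pos hi)

end ShiftedLpkPoly

/-- `ξ_n(x-2) = Σ_{π ∈ S_n} x^{lpk(π)}`, and each `ξ_{n,i}` with
`0 ≤ i ≤ ⌊n/2⌋` is a positive integer. -/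
theorem stmt12 :
    (∀ (n : ℕ) (x : ℝ), xiPoly n (x - 2) = ∑ π : Equiv.Perm (Fin n), x ^ lpk π) ∧
    (∀ (n : ℕ) (i : ℕ), i ≤ n / 2 → 0 < xi n i) :=
  ⟨xiPoly_sub_two, fun _ _ => xi_pos⟩
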